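/- arXiv:1407.6316 — 3 statements merged into one kernel-verified Lean document; each statement's English description precedes it below -/
import Mathlib

section
/- Let λ be an antidominant composition and let σ be a non-attacking filling of dg'(λ). Then coinv(σ̂) = 0 if and only if for every box u = (i,j) ∈ dg'(λ), setting S = {σ((i',j)) : (i',j) ∈ dg'(λ), i' ≤ i}, one has: σ(u) = max{x ∈ S : x ≤ σ̂(d(u))} if the set {x ∈ S : x ≤ σ̂(d(u))} is nonempty, and σ(u) = max S otherwise. -/
open Finset

namespace CO

/-- The column diagram `dg'(λ)` of a composition, as a finset of boxes `(i, j)`,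
`1 ≤ i ≤ n`, `1 ≤ j ≤ λ_i`. -/
def dgF (n : ℕ) (lam : ℕ → ℕ) : Finset (ℕ × ℕ) :=
  (Finset.Icc 1 n).biUnion fun i => (Finset.Icc 1 (lam i)).image fun j => (i, j)

/-- The augmented diagram `d̂g(λ)`: one extra box `(i, 0)` below each column. -/
def augF (n : ℕ) (lam : ℕ → ℕ) : Finset (ℕ × ℕ) :=
  dgF n lam ∪ (Finset.Icc 1 n).image fun i => (i, 0)

/-- The box `d(u)` directly below a box. -/
def dbox (u : ℕ × ℕ) : ℕ × ℕ := (u.1, u.2 - 1)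

/-- The augmented filling `σ̂`: equal to `σ` on positive rows and to `i` on `(i, 0)`. -/
def aug (σ : ℕ × ℕ → ℕ) (u : ℕ × ℕ) : ℕ := if u.2 = 0 then u.1 else σ u

/-- A filling takes values in `{1, …, n}` on the diagram. -/
def IsFilling (n : ℕ) (lam : ℕ → ℕ) (σ : ℕ × ℕ → ℕ) : Prop :=
  ∀ u ∈ dgF n lam, 1 ≤ σ u ∧ σ u ≤ n

/-- Attacking boxes: same row, or consecutive rows with the lower box to the right. -/
def Attack (u v : ℕ × ℕ) : Prop :=
  u ≠ v ∧ (u.2 = v.2 ∨ (u.2 = v.2 + 1 ∧ u.1 < v.1) ∨ (v.2 = u.2 + 1 ∧ v.1 < u.1))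

/-- A non-attacking filling: `σ̂` takes distinct values on attacking pairs of the
augmented diagram. -/
def NonAttacking (n : ℕ) (lam : ℕ → ℕ) (σ : ℕ × ℕ → ℕ) : Prop :=
  ∀ u ∈ augF n lam, ∀ v ∈ augF n lam, Attack u v → aug σ u ≠ aug σ v

/-- The arm of a box `u`. -/
def armF (n : ℕ) (lam : ℕ → ℕ) (u : ℕ × ℕ) : Finset (ℕ × ℕ) :=
  ((dgF n lam).filter fun v => v.1 < u.1 ∧ v.2 = u.2 ∧ lam v.1 ≤ lam u.1) ∪
    ((augF n lam).filter fun v => u.1 < v.1 ∧ v.2 + 1 = u.2 ∧ lam v.1 < lam u.1)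

/-- `a(u) = |arm(u)|`. -/
def armCard (n : ℕ) (lam : ℕ → ℕ) (u : ℕ × ℕ) : ℕ := (armF n lam u).card

/-- The number of inversions of `σ̂`: attacking pairs `u, u'` with `σ̂(u) < σ̂(u')`
and (same row with `u` to the left, or `u'` one row above `u` strictly to the left). -/
def invCard (n : ℕ) (lam : ℕ → ℕ) (σ : ℕ × ℕ → ℕ) : ℕ :=
  ((augF n lam ×ˢ augF n lam).filter fun p =>
    aug σ p.1 < aug σ p.2 ∧
      ((p.1.2 = p.2.2 ∧ p.1.1 < p.2.1) ∨ (p.2.2 = p.1.2 + 1 ∧ p.2.1 < p.1.1))).card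

/-- The descent set of `σ̂`. -/
def desF (n : ℕ) (lam : ℕ → ℕ) (σ : ℕ × ℕ → ℕ) : Finset (ℕ × ℕ) :=
  (dgF n lam).filter fun u => aug σ (dbox u) < aug σ u

/-- The statistic `coinv(σ̂)` (as an integer). -/
def coinv (n : ℕ) (lam : ℕ → ℕ) (σ : ℕ × ℕ → ℕ) : ℤ :=
  (∑ u ∈ dgF n lam, (armCard n lam u : ℤ)) - invCard n lam σ +
    (((Finset.Icc 1 n ×ˢ Finset.Icc 1 n).filter fun p =>
      p.1 < p.2 ∧ lam p.1 ≤ lam p.2).card : ℤ) +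
    ∑ u ∈ desF n lam σ, (armCard n lam u : ℤ)

/-- The statistic `T(σ)`. -/
def Tstat (n : ℕ) (lam : ℕ → ℕ) (σ : ℕ × ℕ → ℕ) : ℤ :=
  coinv n lam σ -
    ∑ u ∈ (dgF n lam).filter fun u => aug σ u ≠ aug σ (dbox u), (armCard n lam u : ℤ)

/-- Antidominant composition: `λ_1 ≤ ⋯ ≤ λ_n`. -/
def Antidominant (n : ℕ) (lam : ℕ → ℕ) : Prop :=
  ∀ i j, 1 ≤ i → i ≤ j → j ≤ n → lam i ≤ lam j

/-- Appropriate filling: non-attacking with `T(σ) = 0`. -/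
def Appropriate (n : ℕ) (lam : ℕ → ℕ) (σ : ℕ × ℕ → ℕ) : Prop :=
  IsFilling n lam σ ∧ NonAttacking n lam σ ∧ Tstat n lam σ = 0

/-- The operation `π` on compositions: `π(λ) = (λ_n + 1, λ_1, …, λ_{n-1})`. -/
def piComp (n : ℕ) (lam : ℕ → ℕ) : ℕ → ℕ :=
  fun i => if i = 1 then lam n + 1 else lam (i - 1)

/-- The operation `π` on boxes. -/
def piBox (n : ℕ) (u : ℕ × ℕ) : ℕ × ℕ :=
  if u.1 < n then (u.1 + 1, u.2) else (1, u.2 + 1)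

/-- Extension by zero of a function defined on the diagram. -/
def ext (n : ℕ) (lam : ℕ → ℕ) (f : {u // u ∈ dgF n lam} → ℕ) : ℕ × ℕ → ℕ :=
  fun u => if h : u ∈ dgF n lam then f ⟨u, h⟩ else 0

/-- `qstat(σ) = Σ (l(u) + 1)` over boxes `u` with `σ̂(u) < σ̂(d(u))`. -/
def qstat (n : ℕ) (lam : ℕ → ℕ) (σ : ℕ × ℕ → ℕ) : ℕ :=
  ∑ u ∈ (dgF n lam).filter fun u => aug σ u < aug σ (dbox u), (lam u.1 - u.2 + 1)

end CO

namespace CO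

variable {n : ℕ} {lam : ℕ → ℕ} {σ : ℕ × ℕ → ℕ}

lemma mem_dgF {u : ℕ × ℕ} :
    u ∈ dgF n lam ↔ 1 ≤ u.1 ∧ u.1 ≤ n ∧ 1 ≤ u.2 ∧ u.2 ≤ lam u.1 := by
  constructor
  · intro h
    simp only [dgF, Finset.mem_biUnion, Finset.mem_image, Finset.mem_Icc] at h
    obtain ⟨i, hi, j, hj, rfl⟩ := h
    exact ⟨hi.1, hi.2, hj.1, hj.2⟩
  · rintro ⟨h1, h2, h3, h4⟩
    simp only [dgF, Finset.mem_biUnion, Finset.mem_image, Finset.mem_Icc]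
    exact ⟨u.1, ⟨h1, h2⟩, u.2, ⟨h3, h4⟩, rfl⟩

lemma mem_augF {u : ℕ × ℕ} :
    u ∈ augF n lam ↔ 1 ≤ u.1 ∧ u.1 ≤ n ∧ u.2 ≤ lam u.1 := by
  simp only [augF, Finset.mem_union, mem_dgF, Finset.mem_image, Finset.mem_Icc]
  constructor
  · rintro (⟨h1, h2, _, h4⟩ | ⟨i, hi, rfl⟩)
    · exact ⟨h1, h2, h4⟩
    · exact ⟨hi.1, hi.2, Nat.zero_le _⟩
  · rintro ⟨h1, h2, h3⟩
    rcases Nat.eq_zero_or_pos u.2 with h | h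
    · exact Or.inr ⟨u.1, ⟨h1, h2⟩, by rw [← h]⟩
    · exact Or.inl ⟨h1, h2, h, h3⟩

lemma dgF_subset_augF : dgF n lam ⊆ augF n lam := Finset.subset_union_left

lemma aug_eq_of_mem_dgF {u : ℕ × ℕ} (hu : u ∈ dgF n lam) : aug σ u = σ u := by
  have := (mem_dgF.1 hu).2.2.1
  simp [aug]; omega

end CO
namespace CO

variable {n : ℕ} {lam : ℕ → ℕ} {σ : ℕ × ℕ → ℕ}

lemma armF_eq (hanti : Antidominant n lam) {u : ℕ × ℕ} (hu : u ∈ dgF n lam) :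
    armF n lam u = (dgF n lam).filter fun v => v.2 = u.2 ∧ v.1 < u.1 := by
  obtain ⟨h1, h2, h3, h4⟩ := mem_dgF.1 hu
  ext v
  simp only [armF, Finset.mem_union, Finset.mem_filter, mem_augF, mem_dgF]
  constructor
  · rintro (⟨hv, ha, hb, _⟩ | ⟨hv, ha, hb, hc⟩)
    · exact ⟨hv, hb, ha⟩
    · exact absurd (hanti u.1 v.1 h1 (le_of_lt ha) hv.2.1) (by omega)
  · rintro ⟨hv, ha, hb⟩
    exact Or.inl ⟨hv, hb, ha, hanti v.1 u.1 hv.1 (le_of_lt hb) h2⟩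

lemma armCard_eq (hanti : Antidominant n lam) {u : ℕ × ℕ} (hu : u ∈ dgF n lam) :
    armCard n lam u = ((dgF n lam).filter fun v => v.2 = u.2 ∧ v.1 < u.1).card := by
  rw [armCard, armF_eq hanti hu]

/-- same-row distinct boxes get distinct values -/
lemma na_row (hna : NonAttacking n lam σ) {v u : ℕ × ℕ} (hv : v ∈ dgF n lam)
    (hu : u ∈ dgF n lam) (h2 : v.2 = u.2) (h1 : v.1 < u.1) : σ v ≠ σ u := by
  have := hna v (dgF_subset_augF hv) u (dgF_subset_augF hu)
    ⟨by intro h; rw [h] at h1; omega, Or.inl h2⟩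
  rwa [aug_eq_of_mem_dgF hv, aug_eq_of_mem_dgF hu] at this

/-- value differs from the value below-right -/
lemma na_diag (hna : NonAttacking n lam σ) {v u : ℕ × ℕ} (hv : v ∈ dgF n lam)
    (hu : u ∈ dgF n lam) (h2 : v.2 = u.2) (h1 : v.1 < u.1) :
    σ v ≠ aug σ (dbox u) := by
  obtain ⟨hu1, hu2, hu3, hu4⟩ := mem_dgF.1 hu
  obtain ⟨hv1, hv2, hv3, hv4⟩ := mem_dgF.1 hv
  have hd : dbox u ∈ augF n lam := by
    rw [mem_augF]; exact ⟨hu1, hu2, by simp [dbox]; omega⟩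
  have hattack : Attack v (dbox u) := by
    refine ⟨?_, Or.inr (Or.inl ⟨?_, ?_⟩)⟩
    · intro h
      have : v.2 = (dbox u).2 := by rw [h]
      simp [dbox] at this; omega
    · simp [dbox]; omega
    · simp [dbox]; omega
  have := hna v (dgF_subset_augF hv) (dbox u) hd hattack
  rwa [aug_eq_of_mem_dgF hv] at this

/-- antidominant closure: rows are suffixes -/
lemma dgF_closed (hanti : Antidominant n lam) {i j i' : ℕ} (h : (i, j) ∈ dgF n lam)
    (hle : i ≤ i') (hn : i' ≤ n) : (i', j) ∈ dgF n lam := by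
  obtain ⟨h1, _, h3, h4⟩ := mem_dgF.1 h
  exact mem_dgF.2 ⟨by omega, hn, h3, le_trans h4 (hanti i i' h1 hle hn)⟩

end CO
namespace CO

variable {n : ℕ} {lam : ℕ → ℕ} {σ : ℕ × ℕ → ℕ}

lemma sum_augF {M : Type*} [AddCommMonoid M] (f : ℕ × ℕ → M) :
    ∑ p ∈ augF n lam, f p =
      ∑ p ∈ dgF n lam, f p + ∑ i ∈ Finset.Icc 1 n, f (i, 0) := by
  rw [augF, Finset.sum_union, Finset.sum_image]
  · intro i _ j _ h; exact (Prod.mk.injEq .. ▸ h).1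
  · rw [Finset.disjoint_right]
    intro a ha hb
    simp only [Finset.mem_image, Finset.mem_Icc] at ha
    obtain ⟨i, _, rfl⟩ := ha
    have := (mem_dgF.1 hb).2.2.1
    omega

lemma card_filter_eq_sum {α : Type*} (s : Finset α) (p : α → Prop) [DecidablePred p] :
    (((s.filter p).card : ℤ)) = ∑ a ∈ s, if p a then (1 : ℤ) else 0 := by
  rw [Finset.card_filter]
  push_cast
  rfl

end CO
namespace CO

variable {n : ℕ} {lam : ℕ → ℕ} {σ : ℕ × ℕ → ℕ}

lemma cross_eq (hanti : Antidominant n lam) :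
    (∑ p1 ∈ augF n lam, ∑ p2 ∈ dgF n lam,
       if aug σ p1 < aug σ p2 ∧ p2.2 = p1.2 + 1 ∧ p2.1 < p1.1 then (1:ℤ) else 0)
    = ∑ u ∈ dgF n lam, ∑ v ∈ dgF n lam,
       if v.2 = u.2 ∧ v.1 < u.1 ∧ aug σ (dbox u) < aug σ v then (1:ℤ) else 0 := by
  have h1 : (∑ p1 ∈ augF n lam, ∑ p2 ∈ dgF n lam,
       if aug σ p1 < aug σ p2 ∧ p2.2 = p1.2 + 1 ∧ p2.1 < p1.1 then (1:ℤ) else 0)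
      = (((augF n lam ×ˢ dgF n lam).filter fun p =>
          aug σ p.1 < aug σ p.2 ∧ p.2.2 = p.1.2 + 1 ∧ p.2.1 < p.1.1).card : ℤ) := by
    rw [card_filter_eq_sum, Finset.sum_product]
  have h2 : (∑ v ∈ dgF n lam, ∑ u ∈ dgF n lam,
       if v.2 = u.2 ∧ v.1 < u.1 ∧ aug σ (dbox u) < aug σ v then (1:ℤ) else 0)
      = (((dgF n lam ×ˢ dgF n lam).filter fun q =>
          q.1.2 = q.2.2 ∧ q.1.1 < q.2.1 ∧ aug σ (dbox q.2) < aug σ q.1).card : ℤ) := by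
    rw [card_filter_eq_sum, Finset.sum_product]
  rw [h1, Finset.sum_comm, h2]
  congr 1
  refine Finset.card_bij' (fun p _ => (p.2, (p.1.1, p.2.2)))
    (fun q _ => ((q.2.1, q.2.2 - 1), q.1)) ?hi ?hj ?hleft ?hright
  case hi =>
    rintro ⟨p1, p2⟩ hp
    simp only [Finset.mem_filter, Finset.mem_product] at hp ⊢
    obtain ⟨⟨hp1, hp2⟩, hlt, heq, hlt2⟩ := hp
    obtain ⟨ha1, ha2, ha3⟩ := mem_augF.1 hp1
    have hu : (p1.1, p2.2) ∈ dgF n lam :=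
      dgF_closed hanti (show (p2.1, p2.2) ∈ dgF n lam by
        rwa [Prod.mk.eta]) (le_of_lt hlt2) ha2
    refine ⟨⟨hp2, hu⟩, trivial, hlt2, ?_⟩
    have hd : dbox (p1.1, p2.2) = p1 := by
      simp only [dbox]; rw [heq]; exact Prod.ext rfl rfl
    rw [hd]
    exact hlt
  case hj =>
    rintro ⟨v, u⟩ hq
    simp only [Finset.mem_filter, Finset.mem_product] at hq ⊢
    obtain ⟨⟨hv, hu⟩, heq, hlt, hb⟩ := hq
    obtain ⟨hu1, hu2, hu3, hu4⟩ := mem_dgF.1 hu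
    refine ⟨⟨mem_augF.2 ⟨by simpa using hu1, by simpa using hu2, by simp; omega⟩, hv⟩,
      ?_, by omega, by simpa using hlt⟩
    have hd : dbox u = (u.1, u.2 - 1) := rfl
    rw [← hd]
    exact hb
  case hleft =>
    rintro ⟨p1, p2⟩ hp
    simp only [Finset.mem_filter, Finset.mem_product] at hp
    obtain ⟨⟨hp1, hp2⟩, hlt, heq, hlt2⟩ := hp
    have hx : p2.2 - 1 = p1.2 := by omega
    exact Prod.ext (Prod.ext rfl hx) rfl
  case hright =>
    rintro ⟨v, u⟩ hq
    simp only [Finset.mem_filter, Finset.mem_product] at hq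
    obtain ⟨⟨hv, hu⟩, heq, hlt, hb⟩ := hq
    exact Prod.ext rfl (Prod.ext rfl heq)


end CO
namespace CO

variable {n : ℕ} {lam : ℕ → ℕ} {σ : ℕ × ℕ → ℕ}

lemma invCard_eq (hanti : Antidominant n lam) :
    (invCard n lam σ : ℤ) =
      (((Finset.Icc 1 n ×ˢ Finset.Icc 1 n).filter fun p =>
          p.1 < p.2 ∧ lam p.1 ≤ lam p.2).card : ℤ) +
      (∑ u ∈ dgF n lam, ∑ v ∈ dgF n lam,
        if v.2 = u.2 ∧ v.1 < u.1 ∧ aug σ v < aug σ u then (1:ℤ) else 0) +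
      (∑ u ∈ dgF n lam, ∑ v ∈ dgF n lam,
        if v.2 = u.2 ∧ v.1 < u.1 ∧ aug σ (dbox u) < aug σ v then (1:ℤ) else 0) := by
  rw [invCard, card_filter_eq_sum, Finset.sum_product]
  -- split each summand into same-row + cross parts
  have step1 : ∀ p1 ∈ augF n lam, ∀ p2 ∈ augF n lam,
      (if aug σ p1 < aug σ p2 ∧
          ((p1.2 = p2.2 ∧ p1.1 < p2.1) ∨ (p2.2 = p1.2 + 1 ∧ p2.1 < p1.1)) then (1:ℤ) else 0)
      = (if aug σ p1 < aug σ p2 ∧ p1.2 = p2.2 ∧ p1.1 < p2.1 then (1:ℤ) else 0)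
        + (if aug σ p1 < aug σ p2 ∧ p2.2 = p1.2 + 1 ∧ p2.1 < p1.1 then (1:ℤ) else 0) := by
    intro p1 _ p2 _
    split_ifs <;> omega
  rw [Finset.sum_congr rfl fun p1 h1 => Finset.sum_congr rfl fun p2 h2 => step1 p1 h1 p2 h2]
  rw [Finset.sum_congr rfl fun p1 (h1 : p1 ∈ augF n lam) => Finset.sum_add_distrib]
  rw [Finset.sum_add_distrib]
  congr 1
  · -- same-row part
    rw [sum_augF (fun p1 => ∑ p2 ∈ augF n lam,
      if aug σ p1 < aug σ p2 ∧ p1.2 = p2.2 ∧ p1.1 < p2.1 then (1:ℤ) else 0)]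
    have hD : (∑ p1 ∈ dgF n lam, ∑ p2 ∈ augF n lam,
        if aug σ p1 < aug σ p2 ∧ p1.2 = p2.2 ∧ p1.1 < p2.1 then (1:ℤ) else 0)
        = ∑ u ∈ dgF n lam, ∑ v ∈ dgF n lam,
          if v.2 = u.2 ∧ v.1 < u.1 ∧ aug σ v < aug σ u then (1:ℤ) else 0 := by
      rw [Finset.sum_congr rfl fun p1 (h1 : p1 ∈ dgF n lam) =>
        sum_augF (fun p2 => if aug σ p1 < aug σ p2 ∧ p1.2 = p2.2 ∧ p1.1 < p2.1
          then (1:ℤ) else 0)]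
      have z1 : ∀ p1 ∈ dgF n lam, (∑ i ∈ Finset.Icc 1 n,
          if aug σ p1 < aug σ (i, 0) ∧ p1.2 = (i, (0:ℕ)).2 ∧ p1.1 < (i, (0:ℕ)).1
          then (1:ℤ) else 0) = 0 := by
        intro p1 h1
        apply Finset.sum_eq_zero
        intro i _
        have := (mem_dgF.1 h1).2.2.1
        rw [if_neg]
        rintro ⟨-, h, -⟩
        simp at h
        omega
      rw [Finset.sum_congr rfl fun p1 h1 => by rw [z1 p1 h1, add_zero]]
      rw [Finset.sum_comm]
      refine Finset.sum_congr rfl fun u hu => Finset.sum_congr rfl fun v hv => ?_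
      refine if_congr ⟨fun ⟨a, b, c⟩ => ⟨b, c, a⟩, fun ⟨b, c, a⟩ => ⟨a, b, c⟩⟩ rfl rfl
    rw [hD]
    have hZ : (∑ i ∈ Finset.Icc 1 n, ∑ p2 ∈ augF n lam,
        if aug σ (i, 0) < aug σ p2 ∧ ((i:ℕ), (0:ℕ)).2 = p2.2 ∧ ((i:ℕ), (0:ℕ)).1 < p2.1
        then (1:ℤ) else 0)
        = (((Finset.Icc 1 n ×ˢ Finset.Icc 1 n).filter fun p =>
            p.1 < p.2 ∧ lam p.1 ≤ lam p.2).card : ℤ) := by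
      rw [Finset.sum_congr rfl fun i (hi : i ∈ Finset.Icc 1 n) =>
        sum_augF (fun p2 => if aug σ (i, 0) < aug σ p2 ∧ ((i:ℕ), (0:ℕ)).2 = p2.2 ∧
          ((i:ℕ), (0:ℕ)).1 < p2.1 then (1:ℤ) else 0)]
      have z2 : ∀ i ∈ Finset.Icc 1 n, (∑ p2 ∈ dgF n lam,
          if aug σ (i, 0) < aug σ p2 ∧ ((i:ℕ), (0:ℕ)).2 = p2.2 ∧ ((i:ℕ), (0:ℕ)).1 < p2.1
          then (1:ℤ) else 0) = 0 := by
        intro i _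
        apply Finset.sum_eq_zero
        intro p2 h2
        have := (mem_dgF.1 h2).2.2.1
        rw [if_neg]
        rintro ⟨-, h, -⟩
        simp at h
        omega
      rw [Finset.sum_congr rfl fun i hi => by rw [z2 i hi, zero_add]]
      rw [card_filter_eq_sum, Finset.sum_product]
      refine Finset.sum_congr rfl fun i hi => Finset.sum_congr rfl fun i' hi' => ?_
      simp only [Finset.mem_Icc] at hi hi'
      have haug : aug σ ((i:ℕ), (0:ℕ)) = i := by simp [aug]
      have haug' : aug σ ((i':ℕ), (0:ℕ)) = i' := by simp [aug]
      rw [haug, haug']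
      refine if_congr ?_ rfl rfl
      constructor
      · rintro ⟨h, -⟩; exact ⟨h, hanti i i' hi.1 (le_of_lt h) hi'.2⟩
      · rintro ⟨h, -⟩; exact ⟨h, rfl, h⟩
    rw [hZ, add_comm]
  · -- cross part
    rw [Finset.sum_congr rfl fun p1 (h1 : p1 ∈ augF n lam) =>
      sum_augF (fun p2 => if aug σ p1 < aug σ p2 ∧ p2.2 = p1.2 + 1 ∧ p2.1 < p1.1
        then (1:ℤ) else 0)]
    have z3 : ∀ p1 ∈ augF n lam, (∑ i ∈ Finset.Icc 1 n,
        if aug σ p1 < aug σ (i, 0) ∧ ((i:ℕ), (0:ℕ)).2 = p1.2 + 1 ∧ ((i:ℕ), (0:ℕ)).1 < p1.1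
        then (1:ℤ) else 0) = 0 := by
      intro p1 _
      apply Finset.sum_eq_zero
      intro i _
      rw [if_neg]
      rintro ⟨-, h, -⟩
      simp at h
    rw [Finset.sum_congr rfl fun p1 h1 => by rw [z3 p1 h1, add_zero]]
    exact cross_eq hanti

end CO
namespace CO

variable {n : ℕ} {lam : ℕ → ℕ} {σ : ℕ × ℕ → ℕ}

lemma armsum_eq (hanti : Antidominant n lam) :
    (∑ u ∈ dgF n lam, (armCard n lam u : ℤ))
      = ∑ u ∈ dgF n lam, ∑ v ∈ dgF n lam,
          if v.2 = u.2 ∧ v.1 < u.1 then (1:ℤ) else 0 := by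
  refine Finset.sum_congr rfl fun u hu => ?_
  rw [armCard_eq hanti hu, card_filter_eq_sum]

lemma dessum_eq (hanti : Antidominant n lam) :
    (∑ u ∈ desF n lam σ, (armCard n lam u : ℤ))
      = ∑ u ∈ dgF n lam, ∑ v ∈ dgF n lam,
          if v.2 = u.2 ∧ v.1 < u.1 ∧ aug σ (dbox u) < aug σ u then (1:ℤ) else 0 := by
  rw [desF, Finset.sum_filter]
  refine Finset.sum_congr rfl fun u hu => ?_
  by_cases hdes : aug σ (dbox u) < aug σ u
  · rw [if_pos hdes, armCard_eq hanti hu, card_filter_eq_sum]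
    refine Finset.sum_congr rfl fun v hv => ?_
    refine if_congr ?_ rfl rfl
    exact ⟨fun ⟨a, b⟩ => ⟨a, b, hdes⟩, fun ⟨a, b, _⟩ => ⟨a, b⟩⟩
  · rw [if_neg hdes]
    symm
    apply Finset.sum_eq_zero
    intro v hv
    rw [if_neg]
    rintro ⟨-, -, h⟩
    exact hdes h

lemma coinv_eq_master (hanti : Antidominant n lam) :
    coinv n lam σ = ∑ u ∈ dgF n lam, ∑ v ∈ dgF n lam,
      (if v.2 = u.2 ∧ v.1 < u.1 then
        (1 - (if aug σ v < aug σ u then (1:ℤ) else 0)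
           - (if aug σ (dbox u) < aug σ v then (1:ℤ) else 0)
           + (if aug σ (dbox u) < aug σ u then (1:ℤ) else 0))
      else 0) := by
  rw [coinv, invCard_eq hanti, armsum_eq hanti, dessum_eq hanti]
  have hring : ∀ a b c d cd : ℤ, a - (cd + b + c) + cd + d = a - b - c + d := by intros; ring
  rw [hring]
  rw [← Finset.sum_sub_distrib, ← Finset.sum_sub_distrib, ← Finset.sum_add_distrib]
  refine Finset.sum_congr rfl fun u hu => ?_
  rw [← Finset.sum_sub_distrib, ← Finset.sum_sub_distrib, ← Finset.sum_add_distrib]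
  refine Finset.sum_congr rfl fun v hv => ?_
  split_ifs <;> omega

end CO
namespace CO

variable {n : ℕ} {lam : ℕ → ℕ} {σ : ℕ × ℕ → ℕ}

lemma coinv_zero_iff (hanti : Antidominant n lam) (hna : NonAttacking n lam σ) :
    coinv n lam σ = 0 ↔
      ∀ u ∈ dgF n lam, ∀ v ∈ dgF n lam, v.2 = u.2 → v.1 < u.1 →
        (1 - (if σ v < σ u then (1:ℤ) else 0)
           - (if aug σ (dbox u) < σ v then (1:ℤ) else 0)
           + (if aug σ (dbox u) < σ u then (1:ℤ) else 0)) = 0 := by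
  have hnn : ∀ u ∈ dgF n lam, ∀ v ∈ dgF n lam,
      (0:ℤ) ≤ (if v.2 = u.2 ∧ v.1 < u.1 then
        (1 - (if aug σ v < aug σ u then (1:ℤ) else 0)
           - (if aug σ (dbox u) < aug σ v then (1:ℤ) else 0)
           + (if aug σ (dbox u) < aug σ u then (1:ℤ) else 0))
      else 0) := by
    intro u hu v hv
    by_cases hp : v.2 = u.2 ∧ v.1 < u.1
    · have h1 := na_row hna hv hu hp.1 hp.2
      have h2 := na_diag hna hv hu hp.1 hp.2
      rw [if_pos hp, aug_eq_of_mem_dgF hv, aug_eq_of_mem_dgF hu]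
      split_ifs <;> omega
    · rw [if_neg hp]
  rw [coinv_eq_master hanti,
    Finset.sum_eq_zero_iff_of_nonneg
      (fun u hu => Finset.sum_nonneg fun v hv => hnn u hu v hv)]
  constructor
  · intro h u hu v hv h2 h1
    have := (Finset.sum_eq_zero_iff_of_nonneg (hnn u hu)).1 (h u hu) v hv
    rw [if_pos ⟨h2, h1⟩, aug_eq_of_mem_dgF hv, aug_eq_of_mem_dgF hu] at this
    exact this
  · intro h u hu
    refine (Finset.sum_eq_zero_iff_of_nonneg (hnn u hu)).2 fun v hv => ?_
    by_cases hp : v.2 = u.2 ∧ v.1 < u.1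
    · rw [if_pos hp, aug_eq_of_mem_dgF hv, aug_eq_of_mem_dgF hu]
      exact h u hu v hv hp.1 hp.2
    · rw [if_neg hp]

lemma box_iff (hanti : Antidominant n lam) (hfill : IsFilling n lam σ)
    (hna : NonAttacking n lam σ) {u : ℕ × ℕ} (hu : u ∈ dgF n lam) :
    (∀ v ∈ dgF n lam, v.2 = u.2 → v.1 < u.1 →
        (1 - (if σ v < σ u then (1:ℤ) else 0)
           - (if aug σ (dbox u) < σ v then (1:ℤ) else 0)
           + (if aug σ (dbox u) < σ u then (1:ℤ) else 0)) = 0) ↔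
      (({x ∈ {x | ∃ i', i' ≤ u.1 ∧ (i', u.2) ∈ dgF n lam ∧ σ (i', u.2) = x} |
            x ≤ aug σ (dbox u)}.Nonempty →
          σ u = sSup {x ∈ {x | ∃ i', i' ≤ u.1 ∧ (i', u.2) ∈ dgF n lam ∧ σ (i', u.2) = x} |
            x ≤ aug σ (dbox u)}) ∧
        (¬ {x ∈ {x | ∃ i', i' ≤ u.1 ∧ (i', u.2) ∈ dgF n lam ∧ σ (i', u.2) = x} |
            x ≤ aug σ (dbox u)}.Nonempty →
          σ u = sSup {x | ∃ i', i' ≤ u.1 ∧ (i', u.2) ∈ dgF n lam ∧ σ (i', u.2) = x})) := by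
  set S : Set ℕ := {x | ∃ i', i' ≤ u.1 ∧ (i', u.2) ∈ dgF n lam ∧ σ (i', u.2) = x} with hS
  set b : ℕ := aug σ (dbox u) with hb
  set t : ℕ := σ u with ht
  have htS : t ∈ S := ⟨u.1, le_refl _, by rwa [Prod.mk.eta], by rw [Prod.mk.eta]⟩
  have hbddS : BddAbove S := by
    refine ⟨n, fun x hx => ?_⟩
    obtain ⟨i', _, hm, rfl⟩ := hx
    exact (hfill _ hm).2
  have hbddA : BddAbove {x ∈ S | x ≤ b} :=
    hbddS.mono fun x hx => hx.1
  -- decomposition of membership in S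
  have hSmem : ∀ x ∈ S, x = t ∨
      ∃ v ∈ dgF n lam, v.2 = u.2 ∧ v.1 < u.1 ∧ σ v = x := by
    rintro x ⟨i', hle, hm, rfl⟩
    rcases eq_or_lt_of_le hle with heq | hlt
    · left; rw [heq, Prod.mk.eta]
    · right; exact ⟨(i', u.2), hm, rfl, hlt, rfl⟩
  constructor
  · intro hall
    have key : ∀ x ∈ S, x ≠ t → x ≠ b ∧
        (1 - (if x < t then (1:ℤ) else 0) - (if b < x then (1:ℤ) else 0)
          + (if b < t then (1:ℤ) else 0)) = 0 := by
      intro x hx hxt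
      rcases hSmem x hx with h | ⟨v, hv, h2, h1, rfl⟩
      · exact absurd h hxt
      · exact ⟨na_diag hna hv hu h2 h1, hall v hv h2 h1⟩
    rcases le_or_gt t b with htb | hbt
    · have hne : ({x ∈ S | x ≤ b}).Nonempty := ⟨t, htS, htb⟩
      have hsup : sSup {x ∈ S | x ≤ b} = t := by
        apply le_antisymm
        · refine csSup_le hne ?_
          rintro x ⟨hxS, hxb⟩
          rcases eq_or_ne x t with rfl | hxt
          · exact le_refl _
          · obtain ⟨hxb', heq⟩ := key x hxS hxt
            split_ifs at heq <;> omega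
        · exact le_csSup hbddA ⟨htS, htb⟩
      exact ⟨fun _ => hsup.symm, fun h => absurd hne h⟩
    · have hempty : ¬ ({x ∈ S | x ≤ b}).Nonempty := by
        rintro ⟨x, hxS, hxb⟩
        rcases eq_or_ne x t with rfl | hxt
        · omega
        · obtain ⟨hxb', heq⟩ := key x hxS hxt
          split_ifs at heq <;> omega
      refine ⟨fun h => absurd h hempty, fun _ => ?_⟩
      have hsup : sSup S = t := by
        apply le_antisymm
        · refine csSup_le ⟨t, htS⟩ ?_
          intro x hxS
          rcases eq_or_ne x t with rfl | hxt
          · exact le_refl _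
          · obtain ⟨hxb', heq⟩ := key x hxS hxt
            split_ifs at heq <;> omega
        · exact le_csSup hbddS htS
      exact hsup.symm
  · rintro ⟨g1, g2⟩ v hv h2 h1
    have hxS : σ v ∈ S := ⟨v.1, le_of_lt h1, by rw [← h2, Prod.mk.eta]; exact hv,
      by rw [← h2, Prod.mk.eta]⟩
    have hxt : σ v ≠ t := na_row hna hv hu h2 h1
    have hxb : σ v ≠ b := na_diag hna hv hu h2 h1
    by_cases hne : ({x ∈ S | x ≤ b}).Nonempty
    · have hts := g1 hne
      have htA : t ∈ {x ∈ S | x ≤ b} := hts ▸ Nat.sSup_mem hne hbddA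
      have htb : t ≤ b := htA.2
      have hcond : σ v ≤ b → σ v ≤ t := fun hle =>
        hts ▸ le_csSup hbddA ⟨hxS, hle⟩
      split_ifs <;> omega
    · have hts := g2 hne
      have hbt : b < t := by
        by_contra h
        exact hne ⟨t, htS, by omega⟩
      have hxle : σ v ≤ t := hts ▸ le_csSup hbddS hxS
      have hbx : b < σ v := by
        by_contra h
        exact hne ⟨σ v, hxS, by omega⟩
      split_ifs <;> omega

end CO
open CO in
/-- For an antidominant composition `λ` and a non-attacking filling
`σ` of `dg'(λ)`, one has `coinv(σ̂) = 0` if and only if `σ` is obtained by the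
reverse greedy rule: for each box `u = (i, j)`, with
`S = {σ((i', j)) : (i', j) ∈ dg'(λ), i' ≤ i}`, `σ(u)` is the maximum of
`{x ∈ S : x ≤ σ̂(d(u))}` if nonempty, and `max S` otherwise. -/
theorem coinv_eq_zero_iff (n : ℕ) (hn : 1 ≤ n) (lam : ℕ → ℕ)
    (hanti : Antidominant n lam)
    (σ : ℕ × ℕ → ℕ) (hfill : IsFilling n lam σ) (hna : NonAttacking n lam σ) :
    coinv n lam σ = 0 ↔
      ∀ u ∈ dgF n lam,
        (({x ∈ {x | ∃ i', i' ≤ u.1 ∧ (i', u.2) ∈ dgF n lam ∧ σ (i', u.2) = x} |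
            x ≤ aug σ (dbox u)}.Nonempty →
          σ u = sSup {x ∈ {x | ∃ i', i' ≤ u.1 ∧ (i', u.2) ∈ dgF n lam ∧ σ (i', u.2) = x} |
            x ≤ aug σ (dbox u)}) ∧
        (¬ {x ∈ {x | ∃ i', i' ≤ u.1 ∧ (i', u.2) ∈ dgF n lam ∧ σ (i', u.2) = x} |
            x ≤ aug σ (dbox u)}.Nonempty →
          σ u = sSup {x | ∃ i', i' ≤ u.1 ∧ (i', u.2) ∈ dgF n lam ∧ σ (i', u.2) = x})) := by
  rw [coinv_zero_iff hanti hna]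
  exact forall₂_congr fun u hu => box_iff hanti hfill hna hu
end

section
/- Let λ be an antidominant composition, let 1 ≤ r ≤ n−1, and let μ = π^r(λ). Then every non-attacking filling σ of dg'(μ) satisfies σ((i,1)) = i for all 1 ≤ i ≤ r. -/
open Finset

open CO in
lemma piComp_iter_pos (n : ℕ) (lam : ℕ → ℕ) :
    ∀ k i, 1 ≤ i → i ≤ k → 1 ≤ (piComp n)^[k] lam i := by
  intro k
  induction k with
  | zero => intro i h1 h2; omega
  | succ k ih =>
    intro i h1 h2
    rw [Function.iterate_succ_apply']
    by_cases h : i = 1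
    · simp [piComp, h]
    · have := ih (i - 1) (by omega) (by omega)
      simpa [piComp, h] using this

open CO in
lemma mem_dgF (n : ℕ) (lam : ℕ → ℕ) (i j : ℕ) (h1 : 1 ≤ i) (h2 : i ≤ n)
    (h3 : 1 ≤ j) (h4 : j ≤ lam i) : (i, j) ∈ dgF n lam := by
  simp only [dgF, Finset.mem_biUnion, Finset.mem_image, Finset.mem_Icc]
  exact ⟨i, ⟨h1, h2⟩, j, ⟨h3, h4⟩, rfl⟩

open CO in
lemma mem_augF_zero (n : ℕ) (lam : ℕ → ℕ) (i : ℕ) (h1 : 1 ≤ i) (h2 : i ≤ n) :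
    (i, 0) ∈ augF n lam := by
  simp only [augF, Finset.mem_union, Finset.mem_image, Finset.mem_Icc]
  exact Or.inr ⟨i, ⟨h1, h2⟩, rfl⟩

open CO in
/-- For an antidominant `λ`, `1 ≤ r ≤ n - 1`, and `μ = π^r(λ)`,
every non-attacking filling `σ` of `dg'(μ)` satisfies `σ((i, 1)) = i` for
`1 ≤ i ≤ r`. -/
theorem first_row_forced (n : ℕ) (hn : 1 ≤ n) (lam : ℕ → ℕ)
    (hanti : Antidominant n lam) (r : ℕ) (hr1 : 1 ≤ r) (hr2 : r ≤ n - 1)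
    (mu : ℕ → ℕ) (hmu : mu = (piComp n)^[r] lam)
    (σ : ℕ × ℕ → ℕ) (hfill : IsFilling n mu σ) (hna : NonAttacking n mu σ) :
    ∀ i, 1 ≤ i → i ≤ r → σ (i, 1) = i := by
  subst hmu
  intro i hi1 hir
  induction i using Nat.strong_induction_on with
  | _ i ih =>
  set mu := (piComp n)^[r] lam with hmu
  have hin : i ≤ n - 1 := le_trans hir hr2
  have hmui : 1 ≤ mu i := piComp_iter_pos n lam r i hi1 hir
  have hmem : (i, 1) ∈ dgF n mu := mem_dgF n mu i 1 hi1 (by omega) le_rfl hmui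
  have hmemA : (i, 1) ∈ augF n mu := Finset.mem_union_left _ hmem
  have hle : σ (i, 1) ≤ i := by
    by_contra h
    push_neg at h
    have hb : σ (i, 1) ≤ n := (hfill _ hmem).2
    have := hna (i, 1) hmemA (σ (i, 1), 0) (mem_augF_zero n mu _ (by omega) hb)
      ⟨by simp, Or.inr (Or.inl ⟨rfl, h⟩)⟩
    simp [aug] at this
  have hne : ∀ j, 1 ≤ j → j < i → σ (i, 1) ≠ j := by
    intro j hj1 hji hcontra
    have hjr : j ≤ r := by omega
    have hmemj : (j, 1) ∈ augF n mu := Finset.mem_union_left _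
      (mem_dgF n mu j 1 hj1 (by omega) le_rfl (piComp_iter_pos n lam r j hj1 hjr))
    have := hna (i, 1) hmemA (j, 1) hmemj
      ⟨by simp; omega, Or.inl rfl⟩
    have hsj := ih j hji hj1 hjr
    simp [aug, hsj, hcontra] at this
  have h1 : 1 ≤ σ (i, 1) := (hfill _ hmem).1
  by_contra h
  exact hne (σ (i, 1)) h1 (by omega) rfl
end

section
/- Fix n ≥ 1, and let l = (l_1,…,l_n) ∈ ℤ_{≥0}^n with l_1+⋯+l_n = m. Then, in ℤ[q]: (Σ_w q^{stat(w)}) · ∏_{i=1}^n ∏_{t=1}^{l_i} (1−q^t) = ∏_{t=1}^m (1−q^t), where w runs over all words (w_1,…,w_m) ∈ {1,…,n}^m with |{i : w_i = t}| = l_t for each t, and stat(w) = |{(i,j) : i < j, and either w_i < w_j < n, or (w_i = n and w_j < n)}|. In other words, the generating function Σ_w q^{stat(w)} equals the q-multinomial coefficient with parameters m and (l_1,…,l_n). -/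
open Finset

namespace CO

/-- Transport a `Fin n`-tuple to a function on `{1, …, n}` (1-based indexing). -/
def liftFin (n : ℕ) (k : Fin n → ℕ) : ℕ → ℕ :=
  fun i => if h : i - 1 < n then k ⟨i - 1, h⟩ else 0

/-- The statistic `stat(w)` on words with letters in `{1, …, n}`: the number of pairs
of positions `i < j` with either `w_i < w_j < n`, or `w_i = n` and `w_j < n`. -/
def wstat (n m : ℕ) (w : Fin m → ℕ) : ℕ :=
  ((Finset.univ ×ˢ Finset.univ : Finset (Fin m × Fin m)).filter fun p =>
    p.1 < p.2 ∧ ((w p.1 < w p.2 ∧ w p.2 < n) ∨ (w p.1 = n ∧ w p.2 < n))).card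

open Classical in
/-- The `q`-multinomial coefficient `binom_q(m; l)`, as the generating function of
`stat` over words of length `m` with letters in `{1, …, n}` and content `l`. -/
noncomputable def qMultinomial (n m : ℕ) (l : ℕ → ℕ) : Polynomial ℤ :=
  ∑ w ∈ (Fintype.piFinset fun _ : Fin m => Finset.Icc 1 n).filter
      fun w => ∀ t ∈ Finset.Icc 1 n, (Finset.univ.filter fun i => w i = t).card = l t,
    Polynomial.X ^ wstat n m w

open Classical

/-- count of letter `s` in a word -/
noncomputable def cnt (m : ℕ) (w : Fin m → ℕ) (s : ℕ) : ℕ :=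
  (Finset.univ.filter fun i => w i = s).card

lemma cnt_succ (m : ℕ) (w : Fin (m+1) → ℕ) (s : ℕ) :
    cnt (m+1) w s = cnt m (fun i => w i.castSucc) s + if w (Fin.last m) = s then 1 else 0 := by
  unfold cnt
  rw [Finset.card_filter, Finset.card_filter, Fin.sum_univ_castSucc]

lemma pair_sum (m : ℕ) (R : Fin (m+1) → Fin (m+1) → Prop) [DecidableRel R] :
    ((univ ×ˢ univ : Finset (Fin (m+1) × Fin (m+1))).filter fun p => p.1 < p.2 ∧ R p.1 p.2).card
    = ((univ ×ˢ univ : Finset (Fin m × Fin m)).filter fun p =>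
          p.1 < p.2 ∧ R p.1.castSucc p.2.castSucc).card
      + (univ.filter fun i : Fin m => R i.castSucc (Fin.last m)).card := by
  rw [Finset.univ_product_univ, Finset.univ_product_univ, Finset.card_filter,
    Finset.card_filter, Finset.card_filter, Fintype.sum_prod_type_right,
    Fintype.sum_prod_type_right, Fin.sum_univ_castSucc]
  congr 1
  · apply Finset.sum_congr rfl; intro y _
    rw [Fin.sum_univ_castSucc]
    simp [Fin.castSucc_lt_castSucc_iff, (Fin.castSucc_lt_last y).not_gt]
  · rw [Fin.sum_univ_castSucc]
    simp [Fin.castSucc_lt_last]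

lemma wstat_succ (n m : ℕ) (w : Fin (m+1) → ℕ) :
    wstat n (m+1) w = wstat n m (fun i => w i.castSucc)
      + (Finset.univ.filter fun i : Fin m =>
          ((w i.castSucc < w (Fin.last m) ∧ w (Fin.last m) < n) ∨
            (w i.castSucc = n ∧ w (Fin.last m) < n))).card := by
  unfold wstat
  exact pair_sum m (fun a b => (w a < w b ∧ w b < n) ∨ (w a = n ∧ w b < n))

lemma sum_cnt (n m : ℕ) (w : Fin m → ℕ) (hw : ∀ i, w i ∈ Finset.Icc 1 n) :
    ∑ t ∈ Finset.Icc 1 n, cnt m w t = m := by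
  have := Finset.card_eq_sum_card_fiberwise
    (f := w) (s := (univ : Finset (Fin m))) (t := Finset.Icc 1 n) (fun i _ => hw i)
  simpa [cnt] using this.symm

lemma count_cond (n m : ℕ) (w : Fin m → ℕ) (hw : ∀ i, w i ∈ Finset.Icc 1 n)
    (t : ℕ) (ht : t ∈ Finset.Icc 1 n) :
    (Finset.univ.filter fun i : Fin m =>
        ((w i < t ∧ t < n) ∨ (w i = n ∧ t < n))).card
      = if t = n then 0 else (∑ s ∈ Finset.Icc 1 (t-1), cnt m w s) + cnt m w n := by
  by_cases htn : t = n
  · subst htn; simp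
  · have htlt : t < n := lt_of_le_of_ne (Finset.mem_Icc.mp ht).2 htn
    rw [if_neg htn]
    have h1 : (Finset.univ.filter fun i : Fin m =>
        ((w i < t ∧ t < n) ∨ (w i = n ∧ t < n)))
        = Finset.univ.filter fun i : Fin m => (w i < t ∨ w i = n) := by
      apply Finset.filter_congr
      intro i _
      constructor
      · rintro (⟨h, _⟩ | ⟨h, _⟩); exacts [Or.inl h, Or.inr h]
      · rintro (h | h); exacts [Or.inl ⟨h, htlt⟩, Or.inr ⟨h, htlt⟩]
    rw [h1, Finset.filter_or, Finset.card_union_of_disjoint]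
    · congr 1
      have h2 : (Finset.univ.filter fun i : Fin m => w i < t)
          = Finset.univ.filter fun i : Fin m => w i ∈ Finset.Icc 1 (t-1) := by
        apply Finset.filter_congr
        intro i _
        have := Finset.mem_Icc.mp (hw i)
        have ht1 := (Finset.mem_Icc.mp ht).1
        simp only [Finset.mem_Icc]
        omega
      rw [h2, Finset.card_eq_sum_card_fiberwise
        (f := w) (s := Finset.univ.filter fun i : Fin m => w i ∈ Finset.Icc 1 (t-1))
        (t := Finset.Icc 1 (t-1)) (fun i hi => (Finset.mem_filter.mp hi).2)]
      apply Finset.sum_congr rfl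
      intro b hb
      unfold cnt
      congr 1
      rw [Finset.filter_filter]
      apply Finset.filter_congr
      intro i _
      constructor
      · exact fun h => h.2
      · exact fun h => ⟨h ▸ hb, h⟩
    · rw [Finset.disjoint_filter]
      intro i _ h1 h2
      rw [h2] at h1
      omega

lemma filt_empty (n m : ℕ) (l : ℕ → ℕ) (h : ∑ t ∈ Finset.Icc 1 n, l t ≠ m)
    (p : (Fin m → ℕ) → Prop) [DecidablePred p]
    (hp : ∀ w, p w ↔ ∀ t ∈ Finset.Icc 1 n, (Finset.univ.filter fun i => w i = t).card = l t) :
    (Fintype.piFinset fun _ : Fin m => Finset.Icc 1 n).filter p = ∅ := by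
  rw [Finset.filter_eq_empty_iff]
  intro w hw hcond
  apply h
  have hcond' := (hp w).mp hcond
  rw [show ∑ t ∈ Finset.Icc 1 n, l t = ∑ t ∈ Finset.Icc 1 n, cnt m w t from
    Finset.sum_congr rfl fun t ht => (hcond' t ht).symm]
  exact sum_cnt n m w (fun i => Fintype.mem_piFinset.mp hw i)

lemma qMultinomial_eq_zero (n m : ℕ) (l : ℕ → ℕ)
    (h : ∑ t ∈ Finset.Icc 1 n, l t ≠ m) : qMultinomial n m l = 0 := by
  unfold qMultinomial
  rw [Finset.filter_congr_decidable]
  exact (congrArg (fun s => ∑ w ∈ s, (Polynomial.X : Polynomial ℤ) ^ wstat n m w)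
    (filt_empty n m l h _ (fun w => Iff.rfl))).trans (Finset.sum_empty)


def cexp (n : ℕ) (l : ℕ → ℕ) (t : ℕ) : ℕ :=
  if t = n then 0 else (∑ s ∈ Finset.Icc 1 (t-1), l s) + l n


lemma telescope (n : ℕ) (hn : 1 ≤ n) (l : ℕ → ℕ) :
    ∑ t ∈ Finset.Icc 1 n, (Polynomial.X : Polynomial ℤ) ^ cexp n l t * (1 - Polynomial.X ^ l t)
      = 1 - Polynomial.X ^ (∑ t ∈ Finset.Icc 1 n, l t) := by
  obtain ⟨k, rfl⟩ : ∃ k, n = k + 1 := ⟨n - 1, by omega⟩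
  rw [Finset.sum_Icc_succ_top (a := 1) (b := k) (by omega),
    Finset.sum_Icc_succ_top (a := 1) (b := k) (f := l) (by omega)]
  set g : ℕ → Polynomial ℤ :=
    fun j => Polynomial.X ^ (l (k+1) + ∑ s ∈ Finset.Icc 1 j, l s) with hg
  have h1 : ∀ t ∈ Finset.Icc 1 k,
      (Polynomial.X : Polynomial ℤ) ^ cexp (k+1) l t * (1 - Polynomial.X ^ l t)
        = g (t-1) - g t := by
    intro t ht
    have ht' := Finset.mem_Icc.mp ht
    have htn : t ≠ k + 1 := by omega
    have key := Finset.sum_Icc_succ_top (a := 1) (b := t - 1) (by omega) l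
    rw [show t - 1 + 1 = t from by omega] at key
    rw [hg]
    simp only [cexp, if_neg htn]
    rw [mul_sub, mul_one, ← pow_add]
    congr 2
    · ring
    · rw [key]; ring
  rw [Finset.sum_congr rfl h1]
  have h3 : ∑ t ∈ Finset.Icc 1 k, (g (t-1) - g t) = g 0 - g k := by
    rw [← Finset.Ico_add_one_right_eq_Icc, Finset.sum_Ico_eq_sum_range]
    simp only [Nat.add_sub_cancel]
    have h2 : ∑ i ∈ Finset.range k, (g (1 + i - 1) - g (1 + i))
        = ∑ i ∈ Finset.range k, (g i - g (i+1)) := by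
      apply Finset.sum_congr rfl
      intro i _
      have e1 : 1 + i - 1 = i := by omega
      have e2 : 1 + i = i + 1 := by omega
      rw [e1, e2]
    rw [h2, Finset.sum_range_sub' g k]
  rw [h3]
  rw [cexp, if_pos rfl, pow_zero, one_mul]
  have hg0 : g 0 = Polynomial.X ^ l (k+1) := by rw [hg]; simp
  have hgk : g k = Polynomial.X ^ (∑ s ∈ Finset.Icc 1 k, l s + l (k+1)) := by
    rw [hg]; ring
  rw [hg0, hgk]
  ring

lemma step2 (n m : ℕ) (l : ℕ → ℕ) (hsum : ∑ s ∈ Finset.Icc 1 n, l s = m + 1)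
    (t : ℕ) (ht : t ∈ Finset.Icc 1 n)
    (A : Finset (Fin (m+1) → ℕ))
    (hA : ∀ w, w ∈ A ↔ (∀ i, w i ∈ Finset.Icc 1 n) ∧ ∀ s ∈ Finset.Icc 1 n, cnt (m+1) w s = l s)
    (B : Finset (Fin m → ℕ))
    (hB : ∀ w', w' ∈ B ↔ (∀ i, w' i ∈ Finset.Icc 1 n) ∧
      ∀ s ∈ Finset.Icc 1 n, cnt m w' s = Function.update l t (l t - 1) s) :
    ∑ w ∈ A.filter (fun w => w (Fin.last m) = t), (Polynomial.X : Polynomial ℤ) ^ wstat n (m+1) w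
      = Polynomial.X ^ cexp n l t * ∑ w' ∈ B, Polynomial.X ^ wstat n m w' := by
  by_cases hlt : 1 ≤ l t
  · have hmain : ∑ w ∈ A.filter (fun w => w (Fin.last m) = t),
        (Polynomial.X : Polynomial ℤ) ^ wstat n (m+1) w
        = ∑ w' ∈ B, (Polynomial.X : Polynomial ℤ) ^ (cexp n l t + wstat n m w') := by
      apply Finset.sum_nbij' (i := fun w (i : Fin m) => w i.castSucc)
        (j := fun w' => Fin.snoc w' t)
      · -- hi
        intro w hw
        obtain ⟨hwA, hlast⟩ := Finset.mem_filter.mp hw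
        obtain ⟨hvals, hcnts⟩ := (hA w).mp hwA
        rw [hB]
        refine ⟨fun i => hvals i.castSucc, fun s hs => ?_⟩
        have h1 := cnt_succ m w s
        rw [hlast, hcnts s hs] at h1
        rcases eq_or_ne s t with rfl | hne
        · rw [Function.update_self]
          have h1' : l s = cnt m (fun i : Fin m => w i.castSucc) s + 1 := by simpa using h1
          omega
        · rw [Function.update_of_ne hne]
          rw [if_neg (fun h => hne h.symm)] at h1
          omega
      · -- hj
        intro w' hw'
        obtain ⟨hvals, hcnts⟩ := (hB w').mp hw'
        have hpre : (fun i : Fin m => (Fin.snoc w' t : Fin (m+1) → ℕ) i.castSucc) = w' := by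
          funext i; simp
        rw [Finset.mem_filter]
        constructor
        · rw [hA]
          constructor
          · intro j
            refine Fin.lastCases ?_ ?_ j
            · rw [Fin.snoc_last]; exact ht
            · intro i; rw [Fin.snoc_castSucc]; exact hvals i
          · intro s hs
            rw [cnt_succ, hpre, Fin.snoc_last, hcnts s hs]
            rcases eq_or_ne s t with rfl | hne
            · rw [Function.update_self, if_pos rfl]; omega
            · rw [Function.update_of_ne hne, if_neg (fun h => hne h.symm), Nat.add_zero]
        · simp
      · -- left_inv
        intro w hw
        obtain ⟨_, hlast⟩ := Finset.mem_filter.mp hw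
        funext j
        refine Fin.lastCases ?_ ?_ j
        · rw [Fin.snoc_last, hlast]
        · intro i; rw [Fin.snoc_castSucc]
      · -- right_inv
        intro w' _
        funext i
        simp
      · -- values
        intro w hw
        obtain ⟨hwA, hlast⟩ := Finset.mem_filter.mp hw
        obtain ⟨hvals, hcnts⟩ := (hA w).mp hwA
        congr 1
        rw [wstat_succ, Nat.add_comm]
        congr 1
        have hcc : (Finset.univ.filter fun i : Fin m =>
            ((w i.castSucc < w (Fin.last m) ∧ w (Fin.last m) < n) ∨
              (w i.castSucc = n ∧ w (Fin.last m) < n))).card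
            = (Finset.univ.filter fun i : Fin m =>
            (((fun i : Fin m => w i.castSucc) i < t ∧ t < n) ∨
              ((fun i : Fin m => w i.castSucc) i = n ∧ t < n))).card := by
          rw [hlast]
        rw [hcc, count_cond n m _ (fun i => hvals i.castSucc) t ht]
        unfold cexp
        by_cases htn : t = n
        · rw [if_pos htn, if_pos htn]
        · rw [if_neg htn, if_neg htn]
        -- need counts of prefix equal to l on relevant indices
          have hkey : ∀ s, s ∈ Finset.Icc 1 n → s ≠ t →
              cnt m (fun i : Fin m => w i.castSucc) s = l s := by
            intro s hs hne
            have h1 := cnt_succ m w s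
            rw [hlast, hcnts s hs, if_neg (fun h => hne h.symm)] at h1
            omega
          have htn' : t ∈ Finset.Icc 1 n := ht
          have htle := Finset.mem_Icc.mp ht
          congr 1
          · apply Finset.sum_congr rfl
            intro s hs
            have hs' := Finset.mem_Icc.mp hs
            exact hkey s (Finset.mem_Icc.mpr ⟨hs'.1, by omega⟩) (by omega)
          · exact hkey n (Finset.mem_Icc.mpr ⟨by omega, le_rfl⟩) (Ne.symm htn)
    rw [hmain, Finset.mul_sum]
    exact Finset.sum_congr rfl fun w' _ => pow_add _ _ _
  · -- l t = 0 : both sides are 0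
    have hlt0 : l t = 0 := by omega
    have hAe : A.filter (fun w => w (Fin.last m) = t) = ∅ := by
      rw [Finset.filter_eq_empty_iff]
      intro w hw hlast
      obtain ⟨_, hcnts⟩ := (hA w).mp hw
      have h2 := hcnts t ht
      rw [hlt0] at h2
      have hmem : Fin.last m ∈ (Finset.univ.filter fun i => w i = t) := by
        simp [hlast]
      have := Finset.card_pos.mpr ⟨_, hmem⟩
      unfold cnt at h2
      omega
    have hBe : B = ∅ := by
      rw [Finset.eq_empty_iff_forall_notMem]
      intro w' hw'
      obtain ⟨hvals, hcnts⟩ := (hB w').mp hw'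
      have hs := sum_cnt n m w' hvals
      have heq : ∑ s ∈ Finset.Icc 1 n, Function.update l t (l t - 1) s
          = ∑ s ∈ Finset.Icc 1 n, l s := by
        apply Finset.sum_congr rfl
        intro s _
        rcases eq_or_ne s t with rfl | hne
        · rw [Function.update_self, hlt0]
        · rw [Function.update_of_ne hne]
      rw [show ∑ s ∈ Finset.Icc 1 n, cnt m w' s
          = ∑ s ∈ Finset.Icc 1 n, Function.update l t (l t - 1) s from
        Finset.sum_congr rfl fun s hs' => hcnts s hs', heq, hsum] at hs
      omega
    rw [hAe, hBe, Finset.sum_empty, Finset.sum_empty, mul_zero]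

lemma qMultinomial_zero (n : ℕ) (l : ℕ → ℕ) (h0 : ∀ t ∈ Finset.Icc 1 n, l t = 0) :
    qMultinomial n 0 l = 1 := by
  unfold qMultinomial
  rw [Finset.filter_congr_decidable]
  rw [Finset.filter_true_of_mem (fun w _ => fun t ht => by rw [h0 t ht]; simp)]
  have hws : ∀ w : Fin 0 → ℕ, wstat n 0 w = 0 := by
    intro w; unfold wstat; simp
  rw [Finset.sum_congr rfl (fun w _ => by rw [hws w, pow_zero])]
  rw [Finset.sum_const, Fintype.card_piFinset]
  simp

lemma qMultinomial_succ (n m : ℕ) (l : ℕ → ℕ) (hsum : ∑ s ∈ Finset.Icc 1 n, l s = m + 1) :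
    qMultinomial n (m+1) l
      = ∑ t ∈ Finset.Icc 1 n,
          Polynomial.X ^ cexp n l t * qMultinomial n m (Function.update l t (l t - 1)) := by
  unfold qMultinomial
  rw [Finset.filter_congr_decidable]
  rw [← Finset.sum_fiberwise_of_maps_to (g := fun w => w (Fin.last m)) (t := Finset.Icc 1 n)
    (fun w hw => Fintype.mem_piFinset.mp (Finset.mem_filter.mp hw).1 (Fin.last m))
    (fun w => (Polynomial.X : Polynomial ℤ) ^ wstat n (m+1) w)]
  apply Finset.sum_congr rfl
  intro t ht
  apply step2 n m l hsum t ht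
  · intro w
    simp only [Finset.mem_filter, Fintype.mem_piFinset]
    exact Iff.rfl
  · intro w'
    simp only [Finset.mem_filter, Fintype.mem_piFinset]
    exact Iff.rfl

lemma aux (n : ℕ) (hn : 1 ≤ n) :
    ∀ m : ℕ, ∀ l : ℕ → ℕ, (∑ t ∈ Finset.Icc 1 n, l t = m) →
    qMultinomial n m l *
        ∏ t ∈ Finset.Icc 1 n, ∏ s ∈ Finset.Icc 1 (l t), (1 - (Polynomial.X : Polynomial ℤ) ^ s)
      = ∏ s ∈ Finset.Icc 1 m, (1 - (Polynomial.X : Polynomial ℤ) ^ s) := by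
  intro m
  induction m with
  | zero =>
    intro l hl
    have h0 : ∀ t ∈ Finset.Icc 1 n, l t = 0 := fun t ht =>
      (Finset.sum_eq_zero_iff.mp hl) t ht
    rw [qMultinomial_zero n l h0, one_mul,
      Finset.prod_congr rfl (fun t ht => by rw [h0 t ht])]
    rw [show Finset.Icc 1 0 = (∅ : Finset ℕ) from Finset.Icc_eq_empty (by omega)]
    simp
  | succ m ih =>
    intro l hl
    rw [qMultinomial_succ n m l hl, Finset.sum_mul]
    have hterm : ∀ t ∈ Finset.Icc 1 n,
        Polynomial.X ^ cexp n l t * qMultinomial n m (Function.update l t (l t - 1)) *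
          ∏ r ∈ Finset.Icc 1 n, ∏ s ∈ Finset.Icc 1 (l r), (1 - (Polynomial.X : Polynomial ℤ) ^ s)
        = Polynomial.X ^ cexp n l t * (1 - Polynomial.X ^ l t) *
          ∏ s ∈ Finset.Icc 1 m, (1 - (Polynomial.X : Polynomial ℤ) ^ s) := by
      intro t ht
      by_cases hlt : 1 ≤ l t
      · have hupd_sum : ∑ r ∈ Finset.Icc 1 n, Function.update l t (l t - 1) r = m := by
          rw [Finset.sum_update_of_mem ht, ← Finset.erase_eq]
          have h2 : l t + ∑ r ∈ (Finset.Icc 1 n).erase t, l r = m + 1 := by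
            rw [Finset.add_sum_erase _ l ht, hl]
          omega
        have hup := ih (Function.update l t (l t - 1)) hupd_sum
        have hFt : ∏ s ∈ Finset.Icc 1 (l t), (1 - (Polynomial.X : Polynomial ℤ) ^ s)
            = (∏ s ∈ Finset.Icc 1 (l t - 1), (1 - (Polynomial.X : Polynomial ℤ) ^ s)) *
              (1 - Polynomial.X ^ l t) := by
          have h3 := Finset.prod_Icc_succ_top (a := 1) (b := l t - 1) (by omega)
            (fun s => 1 - (Polynomial.X : Polynomial ℤ) ^ s)
          rw [show l t - 1 + 1 = l t from by omega] at h3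
          exact h3
        have hF : ∏ r ∈ Finset.Icc 1 n, ∏ s ∈ Finset.Icc 1 (l r),
              (1 - (Polynomial.X : Polynomial ℤ) ^ s)
            = (1 - Polynomial.X ^ l t) *
              ∏ r ∈ Finset.Icc 1 n, ∏ s ∈ Finset.Icc 1 (Function.update l t (l t - 1) r),
                (1 - (Polynomial.X : Polynomial ℤ) ^ s) := by
          rw [← Finset.mul_prod_erase _
              (fun r => ∏ s ∈ Finset.Icc 1 (l r), (1 - (Polynomial.X : Polynomial ℤ) ^ s)) ht,
            ← Finset.mul_prod_erase _
              (fun r => ∏ s ∈ Finset.Icc 1 (Function.update l t (l t - 1) r),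
                (1 - (Polynomial.X : Polynomial ℤ) ^ s)) ht]
          rw [Function.update_self, hFt]
          have herase : ∏ r ∈ (Finset.Icc 1 n).erase t, ∏ s ∈ Finset.Icc 1 (l r),
                (1 - (Polynomial.X : Polynomial ℤ) ^ s)
              = ∏ r ∈ (Finset.Icc 1 n).erase t,
                  ∏ s ∈ Finset.Icc 1 (Function.update l t (l t - 1) r),
                    (1 - (Polynomial.X : Polynomial ℤ) ^ s) := by
            apply Finset.prod_congr rfl
            intro r hr
            rw [Function.update_of_ne (Finset.ne_of_mem_erase hr)]
          rw [herase]; ring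
        rw [hF, ← hup]
        ring
      · have hlt0 : l t = 0 := by omega
        have hm1 : l t - 1 = l t := by omega
        rw [hm1, Function.update_eq_self,
          qMultinomial_eq_zero n m l (by rw [hl]; omega), hlt0, pow_zero]
        ring
    rw [Finset.sum_congr rfl hterm, ← Finset.sum_mul, telescope n hn l, hl]
    rw [Finset.prod_Icc_succ_top (a := 1) (b := m) (by omega)
      (fun s => 1 - (Polynomial.X : Polynomial ℤ) ^ s)]
    ring

end CO


open CO in
/-- The generating function `Σ_w q^{stat(w)}` over words of
length `m` with letters in `{1, …, n}` and content `(l₁, …, l_n)` equals the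
`q`-multinomial coefficient: `(Σ_w q^{stat(w)}) ∏_{i=1}^n ∏_{t=1}^{l_i} (1 - q^t)
= ∏_{t=1}^m (1 - q^t)` in `ℤ[q]`. -/
theorem qMultinomial_identity (n : ℕ) (hn : 1 ≤ n) (m : ℕ) (l : Fin n → ℕ)
    (hl : ∑ i, l i = m) :
    qMultinomial n m (liftFin n l) *
        ∏ i : Fin n, ∏ t ∈ Finset.Icc 1 (l i), (1 - (Polynomial.X : Polynomial ℤ) ^ t)
      = ∏ t ∈ Finset.Icc 1 m, (1 - (Polynomial.X : Polynomial ℤ) ^ t) := by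
  have hlift : ∀ i : Fin n, liftFin n l (i.val + 1) = l i := by
    intro i
    unfold liftFin
    rw [Nat.add_sub_cancel, dif_pos i.isLt]
  have hsumN : ∑ t ∈ Finset.Icc 1 n, liftFin n l t = m := by
    rw [← Finset.Ico_add_one_right_eq_Icc, Finset.sum_Ico_eq_sum_range]
    simp only [Nat.add_sub_cancel]
    rw [← Fin.sum_univ_eq_sum_range (fun j => liftFin n l (1 + j)) n, ← hl]
    apply Finset.sum_congr rfl
    intro i _
    rw [show 1 + i.val = i.val + 1 from by omega, hlift i]
  have key := aux n hn m (liftFin n l) hsumN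
  rw [← key]
  congr 1
  symm
  rw [← Finset.Ico_add_one_right_eq_Icc, Finset.prod_Ico_eq_prod_range]
  simp only [Nat.add_sub_cancel]
  rw [← Fin.prod_univ_eq_prod_range
    (fun j => ∏ s ∈ Finset.Icc 1 (liftFin n l (1 + j)), (1 - (Polynomial.X : Polynomial ℤ) ^ s)) n]
  apply Finset.prod_congr rfl
  intro i _
  rw [show 1 + i.val = i.val + 1 from by omega, hlift i]
end
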